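/- With the notation of the dyadic setup, there exists a constant C > 0 (depending only on α, θ, Γ) such that for all integers Q ≥ 2, all q ≤ Q, and all integers k ≥ 1: |E_q^{(B)}(k)| ≤ C · √(k · N_q^θ). -/

import Mathlib

open Finset

noncomputable section

/-- `e(x) = exp(2πix)`. -/
def e2 (x : ℝ) : ℂ := Complex.exp (2 * Real.pi * x * Complex.I)

/-- The integers in the real interval `[A, B)`. -/
def intIco (A B : ℝ) : Finset ℤ := Finset.Icc ⌈A⌉ (⌈B⌉ - 1)

/-- The integers in the real interval `(A, B]`. -/
def intIoc (A B : ℝ) : Finset ℤ := Finset.Icc (⌊A⌋ + 1) ⌊B⌋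

/-- The Fourier transform `f̂(ξ) = ∫ f(x) e(−xξ) dx`. -/
def FT (f : ℝ → ℝ) (ξ : ℝ) : ℂ :=
  ∫ x : ℝ, (f x : ℂ) * Complex.exp (-(2 * Real.pi * x * ξ) * Complex.I)

/-- `Θ = 1/(1−θ)`. -/
def Th (θ : ℝ) : ℝ := 1 / (1 - θ)

/-- `N_q = q^Γ` for `q ≤ Q`, with the convention `N_{Q+1} = N_Q + 1`. -/
def Nq (Γ Q q : ℕ) : ℕ := if q = Q + 1 then Q ^ Γ + 1 else q ^ Γ

/-- `c₁ = e(−1/8) √(Θ(αθ)^Θ)`. -/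
def c1 (α θ : ℝ) : ℂ := e2 (-(1/8)) * (Real.sqrt (Th θ * (α * θ) ^ Th θ) : ℝ)

/-- `β = α^Θ (θ^{1−Θ} − θ^Θ)`. -/
def betaC (α θ : ℝ) : ℝ := α ^ Th θ * (θ ^ (1 - Th θ) - θ ^ Th θ)

/-- The integers in `R_q(k) = (αθk N_{q+1}^{θ−1}, αθk N_q^{θ−1}]`. -/
def Rq (α θ : ℝ) (Γ Q q : ℕ) (k : ℤ) : Finset ℤ :=
  intIoc (α * θ * (k : ℝ) * (Nq Γ Q (q + 1) : ℝ) ^ (θ - 1))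
    (α * θ * (k : ℝ) * (Nq Γ Q q : ℝ) ^ (θ - 1))

/-- `E_q(k) = ∑_{N_q ≤ y < N_{q+1}} e(α k y^θ)`. -/
def Eqf (α θ : ℝ) (Γ Q q : ℕ) (k : ℤ) : ℂ :=
  ∑ y ∈ Finset.Ico (Nq Γ Q q) (Nq Γ Q (q + 1)), e2 (α * (k : ℝ) * (y : ℝ) ^ θ)

/-- `E_q^{(B)}(k) = c₁ ∑_{r ∈ R_q(k)} k^{Θ/2} r^{−(Θ+1)/2} e(β k^Θ r^{1−Θ})`. -/
def EB (α θ : ℝ) (Γ Q q : ℕ) (k : ℤ) : ℂ :=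
  c1 α θ * ∑ r ∈ Rq α θ Γ Q q k,
    (((k : ℝ) ^ (Th θ / 2) * (r : ℝ) ^ (-(Th θ + 1) / 2) : ℝ) : ℂ) *
      e2 (betaC α θ * (k : ℝ) ^ Th θ * (r : ℝ) ^ (1 - Th θ))

/-- `ℰ_{q,u}(N) = (2/N²) ∑_{e^u ≤ k < e^{u+1}} f̂(k/N) E_{q₁}(k) conj(E_{q₂}(k))`
with `N = Q^Γ`. -/
def Ecal (α θ : ℝ) (f : ℝ → ℝ) (Γ Q q₁ q₂ u : ℕ) : ℂ :=
  (2 / ((Q : ℝ) ^ Γ) ^ 2) * ∑ k ∈ intIco (Real.exp u) (Real.exp ((u : ℝ) + 1)),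
    FT f ((k : ℝ) / (Q : ℝ) ^ Γ) * Eqf α θ Γ Q q₁ k *
      (starRingEnd ℂ) (Eqf α θ Γ Q q₂ k)

/-- `U` is the integer with `e^U ≤ N^{1+ε} < e^{U+1}`, i.e. `⌊(1+ε) log N⌋`. -/
def Udef (ε : ℝ) (Γ Q : ℕ) : ℕ := ⌊(1 + ε) * Real.log ((Q : ℝ) ^ Γ)⌋₊

/-- `S_{Λ,η}(u)`: the supremum of `|∑_{k ∈ I} e(γ k^Θ)|` over `γ ∈ [Λ, ηΛ)` and
subintervals `I = [A, B) ⊆ [e^u, e^{u+1})`. -/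
def SLam (θ Λ η : ℝ) (u : ℕ) : ℝ :=
  sSup {x : ℝ | ∃ γ A B : ℝ, Λ ≤ γ ∧ γ < η * Λ ∧ Real.exp u ≤ A ∧ A ≤ B ∧
    B ≤ Real.exp ((u : ℝ) + 1) ∧
    x = ‖∑ k ∈ intIco A B, e2 (γ * (k : ℝ) ^ Th θ)‖}

/-- `J_{u,q} = {j ∈ ℤ : 0 ≤ j < u − (1−ε)(1−θ)Γ log q}`. -/
def Jset (ε θ : ℝ) (Γ u q : ℕ) : Finset ℤ :=
  intIco 0 ((u : ℝ) - (1 - ε) * (1 - θ) * (Γ : ℝ) * Real.log q)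

/-- The diagonal term `D_{u,q}`. -/
def Duq (α θ : ℝ) (f : ℝ → ℝ) (Γ Q u q : ℕ) : ℂ :=
  2 * ((Th θ * (α * θ) ^ Th θ : ℝ) : ℂ) *
    ∑ k ∈ intIco (Real.exp u) (Real.exp ((u : ℝ) + 1)),
      FT f ((k : ℝ) / (Q : ℝ) ^ Γ) *
        ((∑ r ∈ Rq α θ Γ Q q k,
          (k : ℝ) ^ Th θ * (r : ℝ) ^ (-(Th θ + 1)) : ℝ) : ℂ)

/-!
Each term of `E_q^{(B)}(k)` has modulus at most `k^{Θ/2} A^{-(Θ+1)/2}`, where `A` is the left end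
of `R_q(k) = (A, B]`, and there are at most `B` terms. Since `N_{q+1} ≤ 2^{Γ+1} N_q`, the
endpoints `A` and `B` are comparable, and because `(1-θ)Θ = 1` the product
`B k^{Θ/2} A^{-(Θ+1)/2}` collapses to a constant times `√(k N_q^θ)`.
-/

lemma norm_e2 (x : ℝ) : ‖e2 x‖ = 1 := by
  rw [e2, show (2 : ℂ) * Real.pi * x * Complex.I = ((2 * Real.pi * x : ℝ) : ℂ) * Complex.I by
    push_cast; ring]
  exact Complex.norm_exp_ofReal_mul_I _

lemma c1_ne_zero {α θ : ℝ} (hα : 0 < α) (hθ : θ ∈ Set.Ioo (0 : ℝ) 1) : c1 α θ ≠ 0 := by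
  have hTh : 0 < Th θ := one_div_pos.mpr (sub_pos.mpr hθ.2)
  refine mul_ne_zero (Complex.exp_ne_zero _) (Complex.ofReal_ne_zero.mpr ?_)
  exact (Real.sqrt_pos.mpr (by have := hθ.1; positivity)).ne'

lemma lt_of_mem_intIoc {A B : ℝ} {r : ℤ} (hr : r ∈ intIoc A B) : A < r := by
  rw [intIoc, Finset.mem_Icc, Int.add_one_le_iff, Int.floor_lt] at hr
  exact hr.1

lemma card_intIoc_le {A B : ℝ} (hA : 0 ≤ A) (hB : 0 ≤ B) : ((intIoc A B).card : ℝ) ≤ B := by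
  have hsub : intIoc A B ⊆ Finset.Icc 1 ⌊B⌋ :=
    Finset.Icc_subset_Icc (by simpa using Int.floor_nonneg.mpr hA) le_rfl
  calc ((intIoc A B).card : ℝ) ≤ (Finset.Icc 1 ⌊B⌋).card := by
        exact_mod_cast Finset.card_le_card hsub
    _ = ⌊B⌋₊ := by rw [Int.card_Icc, add_sub_cancel_right, Int.floor_toNat]
    _ ≤ B := Nat.floor_le hB

lemma norm_sum_intIoc_le {A B M : ℝ} (hA : 0 ≤ A) (hB : 0 ≤ B) (hM : 0 ≤ M) (f : ℤ → ℂ)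
    (hf : ∀ r : ℤ, A < r → ‖f r‖ ≤ M) : ‖∑ r ∈ intIoc A B, f r‖ ≤ B * M :=
  calc ‖∑ r ∈ intIoc A B, f r‖ ≤ ∑ r ∈ intIoc A B, ‖f r‖ := norm_sum_le _ _
    _ ≤ (intIoc A B).card * M := by
        rw [← nsmul_eq_mul]
        exact Finset.sum_le_card_nsmul _ _ _ fun r hr ↦ hf r (lt_of_mem_intIoc hr)
    _ ≤ B * M := by gcongr; exact card_intIoc_le hA hB

lemma Nq_pos {Γ Q q : ℕ} (hq : 1 ≤ q) : 0 < Nq Γ Q q := by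
  unfold Nq
  split_ifs
  · omega
  · exact pow_pos hq _

lemma Nq_succ_le {Γ Q q : ℕ} (hq : 1 ≤ q) (hqQ : q ≤ Q) :
    Nq Γ Q (q + 1) ≤ 2 ^ (Γ + 1) * Nq Γ Q q := by
  have hq' : 1 ≤ q ^ Γ := Nat.one_le_pow _ _ hq
  have h2 : 1 ≤ 2 ^ Γ := Nat.one_le_two_pow
  have hNq : Nq Γ Q q = q ^ Γ := if_neg (by omega)
  rw [hNq, Nq, pow_succ]
  split_ifs with hQ
  · obtain rfl : q = Q := by omega
    nlinarith
  · calc (q + 1) ^ Γ ≤ (2 * q) ^ Γ := Nat.pow_le_pow_left (by omega) _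
      _ = 2 ^ Γ * q ^ Γ := Nat.mul_pow 2 q Γ
      _ ≤ 2 ^ Γ * 2 * q ^ Γ := by nlinarith

lemma norm_EB_le {α θ : ℝ} {Γ Q q : ℕ} {k : ℤ} (hα : 0 < α) (hθ : θ ∈ Set.Ioo (0 : ℝ) 1)
    (hk : 0 < k) (hN : 0 < Nq Γ Q (q + 1)) :
    ‖EB α θ Γ Q q k‖ ≤ ‖c1 α θ‖ * (α * θ * k * (Nq Γ Q q : ℝ) ^ (θ - 1) *
      ((k : ℝ) ^ (Th θ / 2) *
        (α * θ * k * (Nq Γ Q (q + 1) : ℝ) ^ (θ - 1)) ^ (-(Th θ + 1) / 2))) := by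
  obtain ⟨hθ0, hθ1⟩ := hθ
  have hTh : 0 < Th θ := one_div_pos.mpr (sub_pos.mpr hθ1)
  have hk' : (0 : ℝ) < k := by exact_mod_cast hk
  have hN' : (0 : ℝ) < Nq Γ Q (q + 1) := by exact_mod_cast hN
  rw [EB, norm_mul]
  gcongr
  refine norm_sum_intIoc_le (by positivity) (by positivity) (by positivity) _ fun r hr ↦ ?_
  have hr0 : (0 : ℝ) < r := lt_trans (by positivity) hr
  rw [norm_mul, norm_e2, mul_one, Complex.norm_real, Real.norm_of_nonneg (by positivity)]
  exact mul_le_mul_of_nonneg_left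
    (Real.rpow_le_rpow_of_nonpos (by positivity) hr.le (by linarith)) (by positivity)

lemma mul_rpow_le_sqrt {θ Θ c k P P' L : ℝ} (hθ : θ < 1) (hΘ : (1 - θ) * Θ = 1) (hc : 0 < c)
    (hk : 0 < k) (hP : 0 < P) (hP' : 0 < P') (hPP' : P' ≤ L * P) :
    c * k * P ^ (θ - 1) * (k ^ (Θ / 2) * (c * k * P' ^ (θ - 1)) ^ (-(Θ + 1) / 2)) ≤
      L ^ ((2 - θ) / 2) * c ^ ((1 - Θ) / 2) * √(k * P ^ θ) := by
  have hL : 0 < L := pos_of_mul_pos_left (hP'.trans_le hPP') hP.le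
  have hA : (c * k * P' ^ (θ - 1)) ^ (-(Θ + 1) / 2) =
      c ^ (-(Θ + 1) / 2) * k ^ (-(Θ + 1) / 2) * P' ^ ((2 - θ) / 2) := by
    rw [Real.mul_rpow (by positivity) (by positivity), Real.mul_rpow hc.le hk.le,
      ← Real.rpow_mul hP'.le]
    congr 2
    linear_combination hΘ / 2
  have hP'le : P' ^ ((2 - θ) / 2) ≤ L ^ ((2 - θ) / 2) * P ^ ((2 - θ) / 2) := by
    rw [← Real.mul_rpow hL.le hP.le]
    exact Real.rpow_le_rpow hP'.le hPP' (by linarith)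
  have hc' : c * c ^ (-(Θ + 1) / 2) = c ^ ((1 - Θ) / 2) := by
    rw [show (1 - Θ) / 2 = 1 + -(Θ + 1) / 2 by ring, Real.rpow_add hc, Real.rpow_one]
  have hk' : k * k ^ (Θ / 2) * k ^ (-(Θ + 1) / 2) = k ^ (1 / 2 : ℝ) := by
    rw [show (1 / 2 : ℝ) = 1 + Θ / 2 + -(Θ + 1) / 2 by ring, Real.rpow_add hk, Real.rpow_add hk,
      Real.rpow_one]
  have hP'' : P ^ (θ - 1) * P ^ ((2 - θ) / 2) = P ^ (θ / 2) := by
    rw [← Real.rpow_add hP]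
    ring_nf
  have hsqrt : √(k * P ^ θ) = k ^ (1 / 2 : ℝ) * P ^ (θ / 2) := by
    rw [Real.sqrt_eq_rpow, Real.mul_rpow hk.le (by positivity), ← Real.rpow_mul hP.le]
    ring_nf
  calc c * k * P ^ (θ - 1) * (k ^ (Θ / 2) * (c * k * P' ^ (θ - 1)) ^ (-(Θ + 1) / 2))
      = (c * c ^ (-(Θ + 1) / 2)) * (k * k ^ (Θ / 2) * k ^ (-(Θ + 1) / 2)) * P ^ (θ - 1) *
          P' ^ ((2 - θ) / 2) := by rw [hA]; ring
    _ ≤ (c * c ^ (-(Θ + 1) / 2)) * (k * k ^ (Θ / 2) * k ^ (-(Θ + 1) / 2)) * P ^ (θ - 1) *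
          (L ^ ((2 - θ) / 2) * P ^ ((2 - θ) / 2)) := by gcongr
    _ = L ^ ((2 - θ) / 2) * c ^ ((1 - Θ) / 2) * √(k * P ^ θ) := by
        rw [hc', hk', hsqrt, ← hP'']; ring

theorem stmt11_general (α θ : ℝ) (hα : 0 < α) (hθ : θ ∈ Set.Ioo (0 : ℝ) 1)
    (Γ : ℕ) :
    ∃ C : ℝ, 0 < C ∧
      ∀ Q : ℕ, 2 ≤ Q → ∀ q : ℕ, 1 ≤ q → q ≤ Q → ∀ k : ℤ, 1 ≤ k →
        ‖EB α θ Γ Q q k‖ ≤ C * Real.sqrt ((k : ℝ) * (Nq Γ Q q : ℝ) ^ θ) := by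
  have hc : 0 < α * θ := mul_pos hα hθ.1
  have hΘ : (1 - θ) * Th θ = 1 := mul_one_div_cancel (sub_pos.mpr hθ.2).ne'
  refine ⟨‖c1 α θ‖ * (((2 : ℝ) ^ (Γ + 1)) ^ ((2 - θ) / 2) * (α * θ) ^ ((1 - Th θ) / 2)),
    by have := norm_pos_iff.mpr (c1_ne_zero hα hθ); positivity, ?_⟩
  intro Q _ q hq hqQ k hk
  have hN : (Nq Γ Q (q + 1) : ℝ) ≤ 2 ^ (Γ + 1) * Nq Γ Q q := by
    exact_mod_cast Nq_succ_le hq hqQ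
  calc ‖EB α θ Γ Q q k‖ ≤ _ := norm_EB_le hα hθ hk (Nq_pos (by omega))
    _ ≤ ‖c1 α θ‖ * (((2 : ℝ) ^ (Γ + 1)) ^ ((2 - θ) / 2) * (α * θ) ^ ((1 - Th θ) / 2) *
          √(k * (Nq Γ Q q : ℝ) ^ θ)) :=
        mul_le_mul_of_nonneg_left (mul_rpow_le_sqrt hθ.2 hΘ hc (by exact_mod_cast hk)
          (mod_cast Nq_pos hq) (mod_cast Nq_pos (by omega)) hN) (norm_nonneg _)
    _ = _ := by ring

/-- **Trivial bound for `E_q^{(B)}`** (equation (2.7)): there is `C > 0`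
depending only on `α, θ, Γ` such that `|E_q^{(B)}(k)| ≤ C √(k N_q^θ)` for all
`Q ≥ 2`, `1 ≤ q ≤ Q` and integers `k ≥ 1`. -/
theorem stmt11 (α θ : ℝ) (hα : 0 < α) (hθ : θ ∈ Set.Ioo (0 : ℝ) 1)
    (Γ : ℕ) (hΓ : 1 ≤ Γ) :
    ∃ C : ℝ, 0 < C ∧
      ∀ Q : ℕ, 2 ≤ Q → ∀ q : ℕ, 1 ≤ q → q ≤ Q → ∀ k : ℤ, 1 ≤ k →
        ‖EB α θ Γ Q q k‖ ≤ C * Real.sqrt ((k : ℝ) * (Nq Γ Q q : ℝ) ^ θ) :=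
  stmt11_general α θ hα hθ Γ
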